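/- For every integer n ≥ 0, Shanks' identity holds: ∑_{j=0}^{n-1} q^{j(2j+1)} (1 + q^{2j+1}) = ∑_{j=0}^{n-1} (q;q²)_j (q²;q²)_n q^{j(2n+1)} / ((q²;q²)_j (q;q²)_n), as an identity of rational functions in q. -/

import Mathlib

/-!
A Wilf–Zeilberger style telescoping argument. Let `F n j` be the `j`-th summand on the right and
`G n j = F n j (1 - q^{2j}) / (1 - q^{2n+1})`. Then `F (n+1) j - F n j = G n (j+1) - G n j`, so
summing over `j ≤ n` shows that the right-hand side grows from `n` to `n + 1` by
`F n n + G n (n+1) = q^{n(2n+1)} + q^{(n+1)(2n+1)}`, which is exactly the new term on the left.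
-/

/-- finite q-Pochhammer symbol `(a;q)_m` in the field of rational functions -/
noncomputable def qPoch (a q : RatFunc ℚ) (m : ℕ) : RatFunc ℚ := ∏ i ∈ Finset.range m, (1 - a * q ^ i)

open Finset Polynomial

lemma RatFunc.X_pow_ne_one {K : Type*} [Field K] {k : ℕ} (hk : k ≠ 0) :
    (RatFunc.X : RatFunc K) ^ k ≠ 1 := by
  rw [← RatFunc.algebraMap_X, ← map_pow, ← map_one (algebraMap K[X] _), Ne,
    (RatFunc.algebraMap_injective K).eq_iff]
  exact fun h => hk (by simpa using congrArg natDegree h)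

namespace Shanks

variable {q : RatFunc ℚ}

lemma one_sub_pow_ne_zero (hq : ∀ k ≠ 0, q ^ k ≠ 1) {k : ℕ} (hk : k ≠ 0) : 1 - q ^ k ≠ 0 :=
  sub_ne_zero.2 (hq k hk).symm

lemma qPoch_ne_zero {a : RatFunc ℚ} (h : ∀ i, a * q ^ i ≠ 1) (m : ℕ) : qPoch a q m ≠ 0 :=
  prod_ne_zero_iff.2 fun i _ => sub_ne_zero.2 (h i).symm

lemma qPoch_odd_succ (m : ℕ) : qPoch q (q ^ 2) (m + 1) = qPoch q (q ^ 2) m * (1 - q ^ (2 * m + 1)) := by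
  rw [qPoch, prod_range_succ, ← qPoch]
  ring

lemma qPoch_even_succ (m : ℕ) :
    qPoch (q ^ 2) (q ^ 2) (m + 1) = qPoch (q ^ 2) (q ^ 2) m * (1 - q ^ (2 * m + 2)) := by
  rw [qPoch, prod_range_succ, ← qPoch]
  ring

lemma qPoch_odd_ne_zero (hq : ∀ k ≠ 0, q ^ k ≠ 1) (m : ℕ) : qPoch q (q ^ 2) m ≠ 0 :=
  qPoch_ne_zero (fun i => by rw [← pow_mul, ← pow_succ']; exact hq _ (by omega)) m

lemma qPoch_even_ne_zero (hq : ∀ k ≠ 0, q ^ k ≠ 1) (m : ℕ) : qPoch (q ^ 2) (q ^ 2) m ≠ 0 :=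
  qPoch_ne_zero (fun i => by rw [← pow_mul, ← pow_add]; exact hq _ (by omega)) m

noncomputable def shanksTerm (q : RatFunc ℚ) (n j : ℕ) : RatFunc ℚ :=
  qPoch q (q ^ 2) j * qPoch (q ^ 2) (q ^ 2) n * q ^ (j * (2 * n + 1)) /
    (qPoch (q ^ 2) (q ^ 2) j * qPoch q (q ^ 2) n)

noncomputable def shanksCertificate (q : RatFunc ℚ) (n j : ℕ) : RatFunc ℚ :=
  shanksTerm q n j * (1 - q ^ (2 * j)) / (1 - q ^ (2 * n + 1))

lemma shanksTerm_succ_left (n j : ℕ) :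
    shanksTerm q (n + 1) j =
      shanksTerm q n j * ((1 - q ^ (2 * n + 2)) * q ^ (2 * j) / (1 - q ^ (2 * n + 1))) := by
  simp only [shanksTerm, qPoch_odd_succ, qPoch_even_succ, div_eq_mul_inv, mul_inv]
  ring

lemma shanksCertificate_succ (hq : ∀ k ≠ 0, q ^ k ≠ 1) (n j : ℕ) :
    shanksCertificate q n (j + 1) =
      shanksTerm q n j * (1 - q ^ (2 * j + 1)) * q ^ (2 * n + 1) / (1 - q ^ (2 * n + 1)) := by
  have h := one_sub_pow_ne_zero hq (k := 2 * j + 2) (by omega)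
  simp only [shanksCertificate, shanksTerm, qPoch_odd_succ, qPoch_even_succ, div_eq_mul_inv,
    mul_inv]
  field_simp
  ring

lemma shanksTerm_succ_sub (hq : ∀ k ≠ 0, q ^ k ≠ 1) (n j : ℕ) :
    shanksTerm q (n + 1) j - shanksTerm q n j =
      shanksCertificate q n (j + 1) - shanksCertificate q n j := by
  have h := one_sub_pow_ne_zero hq (k := 2 * n + 1) (by omega)
  rw [shanksTerm_succ_left, shanksCertificate_succ hq, shanksCertificate]
  field_simp
  ring

lemma shanksTerm_self (hq : ∀ k ≠ 0, q ^ k ≠ 1) (n : ℕ) :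
    shanksTerm q n n = q ^ (n * (2 * n + 1)) := by
  rw [shanksTerm, div_eq_iff (mul_ne_zero (qPoch_even_ne_zero hq n) (qPoch_odd_ne_zero hq n))]
  ring

lemma shanksCertificate_zero (n : ℕ) : shanksCertificate q n 0 = 0 := by
  simp [shanksCertificate]

lemma shanksCertificate_succ_self (hq : ∀ k ≠ 0, q ^ k ≠ 1) (n : ℕ) :
    shanksCertificate q n (n + 1) = q ^ ((n + 1) * (2 * n + 1)) := by
  have h := one_sub_pow_ne_zero hq (k := 2 * n + 1) (by omega)
  rw [shanksCertificate_succ hq, shanksTerm_self hq]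
  field_simp
  ring

lemma sum_shanksTerm_succ (hq : ∀ k ≠ 0, q ^ k ≠ 1) (n : ℕ) :
    ∑ j ∈ range (n + 1), shanksTerm q (n + 1) j =
      ∑ j ∈ range n, shanksTerm q n j + q ^ (n * (2 * n + 1)) + q ^ ((n + 1) * (2 * n + 1)) := by
  calc ∑ j ∈ range (n + 1), shanksTerm q (n + 1) j
      = ∑ j ∈ range (n + 1), (shanksTerm q n j +
          (shanksCertificate q n (j + 1) - shanksCertificate q n j)) :=
        sum_congr rfl fun j _ => by rw [← shanksTerm_succ_sub hq]; ring
    _ = _ := by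
        rw [sum_add_distrib, sum_range_sub, sum_range_succ, shanksTerm_self hq,
          shanksCertificate_zero, shanksCertificate_succ_self hq, sub_zero]

theorem sum_eq_sum_shanksTerm (hq : ∀ k ≠ 0, q ^ k ≠ 1) (n : ℕ) :
    ∑ j ∈ range n, q ^ (j * (2 * j + 1)) * (1 + q ^ (2 * j + 1)) =
      ∑ j ∈ range n, shanksTerm q n j := by
  induction n with
  | zero => simp
  | succ n ih =>
    rw [sum_range_succ, ih, sum_shanksTerm_succ hq]
    ring

end Shanks

theorem shanks_identity (n : ℕ) :
    (∑ j ∈ Finset.range n, RatFunc.X ^ (j * (2 * j + 1)) * (1 + RatFunc.X ^ (2 * j + 1))) =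
    ∑ j ∈ Finset.range n,
      qPoch RatFunc.X (RatFunc.X ^ 2) j * qPoch (RatFunc.X ^ 2) (RatFunc.X ^ 2) n *
          RatFunc.X ^ (j * (2 * n + 1)) /
        (qPoch (RatFunc.X ^ 2) (RatFunc.X ^ 2) j * qPoch RatFunc.X (RatFunc.X ^ 2) n) :=
  Shanks.sum_eq_sum_shanksTerm (fun _ => RatFunc.X_pow_ne_one) n
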